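/- (Abstract form of the H_n example.) Let f be a loop-count function on states of n crossings that is pseudo-adequate (f(Function.update s_A i true) ≤ f(s_A) and f(Function.update s_B i false) ≤ f(s_B) for every i) and satisfies f(s_A) = f(s_B) = 1. Then span ⟨f⟩ = 2n, where ⟨f⟩ := Σ_s w(s); in particular, if n is odd then span ⟨f⟩ is not divisible by 4. -/

import Mathlib

open LaurentPolynomial

/-- Maximal degree (max of the support), with convention `odeg 0 = 0`. -/
noncomputable def odeg (g : LaurentPolynomial ℤ) : ℤ := WithBot.unbotD 0 g.coeff.support.max

/-- Minimal degree (min of the support), with convention `udeg 0 = 0`. -/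
noncomputable def udeg (g : LaurentPolynomial ℤ) : ℤ := WithTop.untopD 0 g.coeff.support.min

/-- The span of a Laurent polynomial. -/
noncomputable def lspan (g : LaurentPolynomial ℤ) : ℤ := odeg g - udeg g

/-- Number of crossings spliced by an A-splice in the state `s`. -/
def alpha {n : ℕ} (s : Fin n → Bool) : ℕ :=
  (Finset.univ.filter (fun i => s i = false)).card

/-- Number of crossings spliced by a B-splice in the state `s`. -/
def beta {n : ℕ} (s : Fin n → Bool) : ℕ :=
  (Finset.univ.filter (fun i => s i = true)).card

/-- A loop-count function: at least one loop in every state, and changing the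
splice at one crossing changes the number of loops by at most one. -/
def IsLoopCount {n : ℕ} (f : (Fin n → Bool) → ℕ) : Prop :=
  (∀ s, 1 ≤ f s) ∧
    ∀ (s : Fin n → Bool) (i : Fin n),
      |(f (Function.update s i (!(s i))) : ℤ) - (f s : ℤ)| ≤ 1

/-- The weight `A^(α(s)-β(s)) * (-A^2 - A^(-2))^(f(s)-1)` of a state `s`. -/
noncomputable def weight {n : ℕ} (f : (Fin n → Bool) → ℕ) (s : Fin n → Bool) :
    LaurentPolynomial ℤ :=
  T ((alpha s : ℤ) - (beta s : ℤ)) * (-T 2 - T (-2)) ^ (f s - 1)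

/-- The Kauffman bracket of a loop-count function: the sum of the weights. -/
noncomputable def bracket {n : ℕ} (f : (Fin n → Bool) → ℕ) : LaurentPolynomial ℤ :=
  ∑ s : Fin n → Bool, weight f s

/-!
The extreme state `s_A` has weight exactly `A^n`. For any other state, walking from `s_A` one
splice at a time and using pseudo-adequacy at the first step gives `f s < f s_A + β(s) = 1 + β(s)`,
so the top degree `α - β + 2(f s - 1)` of its weight is at most `α + β - 2 = n - 2`. Hence `⟨f⟩`
has top coefficient `1` in degree `n`. Swapping all splices (`s ↦ not ∘ s`) exchanges the roles
of `s_A` and `s_B` and turns `⟨f⟩` into its image under `A ↦ A⁻¹`, which gives bottom degree `-n`.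
-/

section Coefficients

variable {R : Type*}

lemma coeff_T_mul [Semiring R] (d k : ℤ) (p : R[T;T⁻¹]) :
    (T d * p).coeff k = p.coeff (k - d) := by
  rw [T, AddMonoidAlgebra.coeff_single_mul_apply, one_mul, neg_add_eq_sub]

lemma coeff_mul_T [Semiring R] (p : R[T;T⁻¹]) (d k : ℤ) :
    (p * T d).coeff k = p.coeff (k - d) := by
  rw [T, AddMonoidAlgebra.coeff_mul_single_apply, mul_one, sub_eq_add_neg]

lemma coeff_neg_T_two_sub_T_neg_two_pow_eq_zero [Ring R] {m : ℕ} {k : ℤ} (hk : 2 * (m : ℤ) < k) :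
    ((-T 2 - T (-2) : R[T;T⁻¹]) ^ m).coeff k = 0 := by
  induction m generalizing k with
  | zero => rw [pow_zero, ← T_zero, T_apply, if_neg (by omega)]
  | succ m ih =>
    rw [pow_succ, mul_sub, mul_neg, AddMonoidAlgebra.coeff_sub, AddMonoidAlgebra.coeff_neg,
      Finsupp.sub_apply, Finsupp.neg_apply, coeff_mul_T, coeff_mul_T,
      ih (by omega), ih (by omega), neg_zero, sub_zero]

end Coefficients

lemma odeg_eq_of_coeff {g : LaurentPolynomial ℤ} {a : ℤ} (ha : g.coeff a ≠ 0)
    (hgt : ∀ k, a < k → g.coeff k = 0) : odeg g = a := by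
  have hmax : g.coeff.support.max = a := by
    refine le_antisymm (Finset.max_le fun k hk => ?_)
      (Finset.le_max (Finsupp.mem_support_iff.2 ha))
    exact WithBot.coe_le_coe.2 (not_lt.1 fun hak => Finsupp.mem_support_iff.1 hk (hgt k hak))
  rw [odeg, hmax, WithBot.unbotD_coe]

lemma udeg_eq_of_coeff {g : LaurentPolynomial ℤ} {b : ℤ} (hb : g.coeff b ≠ 0)
    (hlt : ∀ k, k < b → g.coeff k = 0) : udeg g = b := by
  have hmin : g.coeff.support.min = b := by
    refine le_antisymm (Finset.min_le (Finsupp.mem_support_iff.2 hb))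
      (Finset.le_min fun k hk => ?_)
    exact WithTop.coe_le_coe.2 (not_lt.1 fun hkb => Finsupp.mem_support_iff.1 hk (hlt k hkb))
  rw [udeg, hmin, WithTop.untopD_coe]

section States

variable {n : ℕ}

lemma beta_eq_zero_iff {s : Fin n → Bool} : beta s = 0 ↔ s = fun _ => false := by
  simp [beta, Finset.filter_eq_empty_iff, funext_iff]

lemma beta_update_false {s : Fin n → Bool} {i : Fin n} (hi : s i = true) :
    beta (Function.update s i false) + 1 = beta s := by
  have hfilter : Finset.univ.filter (fun j => Function.update s i false j = true) =
      (Finset.univ.filter fun j => s j = true).erase i := by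
    ext j
    by_cases h : j = i <;> simp [h, Function.update_of_ne]
  rw [beta, beta, hfilter, Finset.card_erase_add_one (by simpa using hi)]

lemma alpha_add_beta (s : Fin n → Bool) : alpha s + beta s = n := by
  simpa [alpha, beta] using
    Finset.card_filter_add_card_filter_not (s := Finset.univ) (fun i => s i = false)

lemma alpha_not_comp (s : Fin n → Bool) : alpha (not ∘ s) = beta s := by
  simp [alpha, beta]

lemma beta_not_comp (s : Fin n → Bool) : beta (not ∘ s) = alpha s := by
  simp [alpha, beta]

end States

section LoopCount

variable {n : ℕ} {f : (Fin n → Bool) → ℕ}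

theorem IsLoopCount.lt_add_beta (hf : IsLoopCount f)
    (hA : ∀ i, f (Function.update (fun _ => false) i true) ≤ f (fun _ => false))
    (s : Fin n → Bool) (hs : s ≠ fun _ => false) : f s < f (fun _ => false) + beta s := by
  induction hb : beta s generalizing s with
  | zero => exact absurd (beta_eq_zero_iff.1 hb) hs
  | succ b ih =>
    obtain ⟨i, hi⟩ := Finset.card_pos.1 (hb ▸ b.succ_pos : 0 < beta s)
    set t := Function.update s i false
    have hi : s i = true := (Finset.mem_filter.1 hi).2
    have hst : Function.update t i (!t i) = s := by simp [t, ← hi]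
    have hstep : f s ≤ f t + 1 := by
      have := abs_le.1 (hf.2 t i)
      rw [hst] at this
      omega
    by_cases ht : t = fun _ => false
    · have : f s ≤ f (fun _ => false) := by
        rw [← hst, ht]
        exact hA i
      omega
    · have hbeta : beta t + 1 = beta s := beta_update_false hi
      have := ih t ht (by omega)
      omega

theorem IsLoopCount.comp_not (hf : IsLoopCount f) : IsLoopCount fun s => f (not ∘ s) := by
  refine ⟨fun s => hf.1 _, fun s i => ?_⟩
  simpa [Function.comp_update] using hf.2 (not ∘ s) i

end LoopCount

section Bracket

variable {n : ℕ} {f : (Fin n → Bool) → ℕ}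

lemma coeff_weight_eq_zero {s : Fin n → Bool} {k : ℤ}
    (hk : (alpha s : ℤ) - beta s + 2 * ((f s - 1 : ℕ) : ℤ) < k) : (weight f s).coeff k = 0 := by
  rw [weight, coeff_T_mul]
  exact coeff_neg_T_two_sub_T_neg_two_pow_eq_zero (by omega)

lemma weight_false_eq_T (hfA : f (fun _ => false) = 1) : weight f (fun _ => false) = T n := by
  simp [weight, hfA, alpha, beta]

lemma not_comp_not_comp (s : Fin n → Bool) : not ∘ not ∘ s = s :=
  funext fun i => Bool.not_not (s i)

lemma invert_weight (s : Fin n → Bool) :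
    invert (weight f s) = weight (fun s => f (not ∘ s)) (not ∘ s) := by
  have hδ : invert (-T 2 - T (-2) : LaurentPolynomial ℤ) = -T 2 - T (-2) := by
    rw [map_sub, map_neg, invert_T, invert_T, neg_neg, neg_sub_comm]
  rw [weight, weight, map_mul, map_pow, hδ, invert_T, not_comp_not_comp, alpha_not_comp,
    beta_not_comp, neg_sub]

lemma bracket_comp_not : bracket (fun s => f (not ∘ s)) = invert (bracket f) := by
  rw [bracket, bracket, map_sum]
  simp_rw [invert_weight]
  exact (Equiv.sum_comp (Function.Involutive.toPerm _ not_comp_not_comp) _).symm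

lemma coeff_bracket (k : ℤ) : (bracket f).coeff k = ∑ s, (weight f s).coeff k := by
  rw [bracket, AddMonoidAlgebra.coeff_sum, Finsupp.finsetSum_apply]

theorem coeff_bracket_eq_coeff_T_of_le (hf : IsLoopCount f)
    (hA : ∀ i, f (Function.update (fun _ => false) i true) ≤ f (fun _ => false))
    (hfA : f (fun _ => false) = 1) :
    ∀ k : ℤ, n ≤ k → (bracket f).coeff k = (T n : LaurentPolynomial ℤ).coeff k := by
  intro k hk
  rw [coeff_bracket, Finset.sum_eq_single_of_mem _ (Finset.mem_univ _), weight_false_eq_T hfA]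
  intro s _ hs
  have hfs := hf.lt_add_beta hA s hs
  have hsum := alpha_add_beta s
  have hpos := hf.1 s
  exact coeff_weight_eq_zero (by omega)

end Bracket

/-- Abstract form of the `H_n` example: if `f` is pseudo-adequate with
`f(s_A) = f(s_B) = 1`, then `span ⟨f⟩ = 2n`; in particular, if `n` is odd then
`span ⟨f⟩` is not divisible by `4`. -/
theorem lspan_bracket_eq_two_n {n : ℕ} (f : (Fin n → Bool) → ℕ)
    (hf : IsLoopCount f)
    (hA : ∀ i : Fin n, f (Function.update (fun _ => false) i true) ≤ f (fun _ => false))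
    (hB : ∀ i : Fin n, f (Function.update (fun _ => true) i false) ≤ f (fun _ => true))
    (hfA : f (fun _ => false) = 1) (hfB : f (fun _ => true) = 1) :
    lspan (bracket f) = 2 * (n : ℤ) ∧
    (Odd n → ¬ (4 : ℤ) ∣ lspan (bracket f)) := by
  have top := coeff_bracket_eq_coeff_T_of_le hf hA hfA
  have bottom := coeff_bracket_eq_coeff_T_of_le hf.comp_not
    (fun i => by rw [Function.comp_update]; exact hB i) hfB
  simp only [bracket_comp_not, invert_apply, T_apply] at top bottom
  have hodeg : odeg (bracket f) = n :=
    odeg_eq_of_coeff (by simp [top]) fun k hk => by simpa [hk.ne] using top k hk.le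
  have hudeg : udeg (bracket f) = -n :=
    udeg_eq_of_coeff (by simp [bottom n le_rfl]) fun k hk => by
      simpa [show (n : ℤ) ≠ -k by omega] using bottom (-k) (by omega)
  have hspan : lspan (bracket f) = 2 * n := by rw [lspan, hodeg, hudeg]; ring
  refine ⟨hspan, fun ⟨t, ht⟩ h4 => ?_⟩
  rw [hspan, ht] at h4
  omega
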